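/- arXiv:2309.00488 — 3 statements merged into one kernel-verified Lean document; each statement's English description precedes it below -/
import Mathlib

section
/- Let E be a Polish space, α > 0, and let X be an E-valued progressively measurable process on a filtered probability space whose initial value X_0 has law ν. Let ψ, g : E → ℝ be bounded measurable functions such that M_t := ψ(X_t) − ψ(X_0) − ∫_0^t g(X_s) ds is a martingale with respect to the filtration. Then E[∫_0^∞ e^{−α s} (α ψ(X_s) − g(X_s)) ds] = ∫_E ψ dν. In particular, if k : E → ℝ is bounded measurable and g = α ψ − k, then E[∫_0^∞ e^{−α s} k(X_s) ds] = ∫_E ψ dν. -/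
/-!
Taking expectations in the martingale property shows that `u s = E[ψ (X s)]` and
`v s = E[g (X s)]` satisfy `u t = u 0 + ∫_0^t v`. For any such pair of functions,
`∫_0^∞ e^{-α s} (α u s - v s) ds = u 0`: by Fubini and `∫_r^∞ α e^{-α s} ds = e^{-α r}`, the term
`∫_0^∞ α e^{-α s} ∫_0^s v` cancels `∫_0^∞ e^{-α s} v s`. A further application of Fubini exchanges
the expectation with the time integral.
-/

open MeasureTheory Set Real Function

section Laplace

variable {α : ℝ}

lemma integral_Ioi_mul_exp_neg_mul (hα : 0 < α) (c : ℝ) :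
    ∫ s in Ioi c, α * exp (-(α * s)) = exp (-(α * c)) := by
  simp_rw [integral_const_mul, ← neg_mul, integral_exp_mul_Ioi (neg_lt_zero.2 hα)]
  field_simp

lemma integrableOn_exp_neg_mul (hα : 0 < α) (c : ℝ) :
    IntegrableOn (fun s => exp (-(α * s))) (Ioi c) := by
  simpa only [neg_mul] using integrableOn_exp_mul_Ioi (neg_lt_zero.2 hα) c

/-- The kernel `α e^{-α s} v(r) 𝟙{r ≤ s}`: integrating out `r` gives `α e^{-α s} ∫_0^s v`,
integrating out `s` gives `e^{-α r} v(r)`. -/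
noncomputable def laplaceKernel (α : ℝ) (v : ℝ → ℝ) (p : ℝ × ℝ) : ℝ :=
  {q : ℝ × ℝ | q.2 ≤ q.1}.indicator (fun q => α * exp (-(α * q.1)) * v q.2) p

lemma laplaceKernel_eq_indicator_Iic (v : ℝ → ℝ) (s r : ℝ) :
    laplaceKernel α v (s, r) = (Iic s).indicator (fun r => α * exp (-(α * s)) * v r) r :=
  rfl

lemma laplaceKernel_eq_indicator_Ici (v : ℝ → ℝ) (s r : ℝ) :
    laplaceKernel α v (s, r) = (Ici r).indicator (fun s => α * exp (-(α * s)) * v r) s :=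
  rfl

lemma norm_laplaceKernel (hα : 0 ≤ α) (v : ℝ → ℝ) (p : ℝ × ℝ) :
    ‖laplaceKernel α v p‖ = laplaceKernel α (fun r => ‖v r‖) p := by
  simp only [laplaceKernel, norm_indicator_eq_indicator_norm, norm_mul, Real.norm_eq_abs,
    abs_of_nonneg hα, abs_exp]

lemma measurable_laplaceKernel {v : ℝ → ℝ} (hv : Measurable v) :
    Measurable (laplaceKernel α v) :=
  Measurable.indicator (by fun_prop) (measurableSet_le measurable_snd measurable_fst)

lemma setIntegral_laplaceKernel_left (v : ℝ → ℝ) (s : ℝ) :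
    ∫ r in Ioi 0, laplaceKernel α v (s, r) = α * exp (-(α * s)) * ∫ r in Ioc 0 s, v r := by
  simp_rw [laplaceKernel_eq_indicator_Iic]
  rw [integral_indicator measurableSet_Iic,
    Measure.restrict_restrict measurableSet_Iic, Iic_inter_Ioi, integral_const_mul]

lemma setIntegral_laplaceKernel_right (hα : 0 < α) (v : ℝ → ℝ) {r : ℝ} (hr : 0 < r) :
    ∫ s in Ioi 0, laplaceKernel α v (s, r) = exp (-(α * r)) * v r := by
  simp_rw [laplaceKernel_eq_indicator_Ici]
  rw [integral_indicator measurableSet_Ici,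
    Measure.restrict_restrict measurableSet_Ici, inter_eq_left.2 (Ici_subset_Ioi.2 hr),
    integral_Ici_eq_integral_Ioi, integral_mul_const, integral_Ioi_mul_exp_neg_mul hα]

lemma integrable_laplaceKernel (hα : 0 < α) {v : ℝ → ℝ} (hv : Measurable v)
    (hvi : IntegrableOn (fun r => exp (-(α * r)) * v r) (Ioi 0)) :
    Integrable (laplaceKernel α v) ((volume.restrict (Ioi 0)).prod (volume.restrict (Ioi 0))) := by
  refine (integrable_prod_iff' (measurable_laplaceKernel hv).aestronglyMeasurable).2 ⟨?_, ?_⟩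
  · refine ae_of_all _ fun r => ?_
    simp_rw [laplaceKernel_eq_indicator_Ici]
    exact (((integrableOn_exp_neg_mul hα 0).const_mul α).mul_const (v r)).indicator
      measurableSet_Ici
  · refine hvi.norm.congr ?_
    filter_upwards [ae_restrict_mem measurableSet_Ioi] with r hr
    simp only [norm_laplaceKernel hα.le, setIntegral_laplaceKernel_right hα _ hr, norm_mul,
      Real.norm_eq_abs, abs_exp]

theorem setIntegral_mul_exp_neg_mul_integral_Ioc (hα : 0 < α) {v : ℝ → ℝ} (hv : Measurable v)
    (hvi : IntegrableOn (fun r => exp (-(α * r)) * v r) (Ioi 0)) :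
    IntegrableOn (fun s => α * exp (-(α * s)) * ∫ r in Ioc 0 s, v r) (Ioi 0) ∧
      ∫ s in Ioi 0, α * exp (-(α * s)) * ∫ r in Ioc 0 s, v r
        = ∫ r in Ioi 0, exp (-(α * r)) * v r := by
  have hK := integrable_laplaceKernel hα hv hvi
  simp_rw [← setIntegral_laplaceKernel_left]
  refine ⟨hK.integral_prod_left, ?_⟩
  rw [integral_integral_swap (f := fun s r => laplaceKernel α v (s, r)) hK]
  exact setIntegral_congr_fun measurableSet_Ioi fun r hr => setIntegral_laplaceKernel_right hα v hr

theorem setIntegral_exp_neg_mul_mul_sub_eq (hα : 0 < α) {u v : ℝ → ℝ} (hv : Measurable v)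
    (hvi : IntegrableOn (fun r => exp (-(α * r)) * v r) (Ioi 0))
    (huv : ∀ t, 0 < t → u t = u 0 + ∫ r in Ioc 0 t, v r) :
    ∫ s in Ioi 0, exp (-(α * s)) * (α * u s - v s) = u 0 := by
  obtain ⟨hint, hlaplace⟩ := setIntegral_mul_exp_neg_mul_integral_Ioc hα hv hvi
  have hconst : IntegrableOn (fun s => α * exp (-(α * s)) * u 0) (Ioi 0) :=
    ((integrableOn_exp_neg_mul hα 0).const_mul α).mul_const _
  have hsum : IntegrableOn
      (fun s => α * exp (-(α * s)) * u 0 + α * exp (-(α * s)) * ∫ r in Ioc 0 s, v r) (Ioi 0) :=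
    hconst.add hint
  calc ∫ s in Ioi 0, exp (-(α * s)) * (α * u s - v s)
      = ∫ s in Ioi 0, (α * exp (-(α * s)) * u 0 + α * exp (-(α * s)) * (∫ r in Ioc 0 s, v r)
          - exp (-(α * s)) * v s) :=
        setIntegral_congr_fun measurableSet_Ioi fun s hs => by simp only [huv s hs]; ring
    _ = (∫ s in Ioi 0, α * exp (-(α * s)) * u 0)
          + (∫ s in Ioi 0, α * exp (-(α * s)) * ∫ r in Ioc 0 s, v r)
          - ∫ s in Ioi 0, exp (-(α * s)) * v s := by
        rw [integral_sub hsum hvi, integral_add hconst hint]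
    _ = u 0 := by
        rw [hlaplace, integral_mul_const, integral_Ioi_mul_exp_neg_mul hα]
        simp

end Laplace

section Fubini

variable {T Ω : Type*} [MeasurableSpace T] [MeasurableSpace Ω] {μ : Measure T} {P : Measure Ω}

lemma integrable_comp_of_abs_le [IsFiniteMeasure P] {E : Type*} [MeasurableSpace E]
    {ψ : E → ℝ} {Y : Ω → E} {C : ℝ} (hψ : Measurable ψ) (hY : Measurable Y)
    (hC : ∀ x, |ψ x| ≤ C) : Integrable (fun ω => ψ (Y ω)) P :=
  .of_bound (hψ.comp hY).aestronglyMeasurable C (ae_of_all _ fun ω => hC (Y ω))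

lemma abs_integral_le_of_abs_le [IsProbabilityMeasure P] {f : Ω → ℝ} {C : ℝ}
    (hC : ∀ ω, |f ω| ≤ C) : |∫ ω, f ω ∂P| ≤ C := by
  simpa using norm_integral_le_of_norm_le_const (μ := P) (f := f) (ae_of_all _ hC)

variable [IsFiniteMeasure P] {w : T → ℝ} {Y : T → Ω → ℝ} {C : ℝ}

lemma integrable_prod_mul_of_abs_le (hw : Integrable w μ) (hY : Measurable (uncurry Y))
    (hC : ∀ s ω, |Y s ω| ≤ C) :
    Integrable (uncurry fun ω s => w s * Y s ω) (P.prod μ) := by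
  refine ((integrable_const C).mul_prod hw.norm).mono' ?_ (ae_of_all _ fun p => ?_)
  · exact hw.aestronglyMeasurable.comp_snd.mul (hY.comp measurable_swap).aestronglyMeasurable
  · rw [uncurry_apply_pair, norm_mul, mul_comm]
    exact mul_le_mul_of_nonneg_right (hC _ _) (norm_nonneg _)

lemma integral_integral_mul_swap_of_abs_le [SFinite μ] (hw : Integrable w μ)
    (hY : Measurable (uncurry Y)) (hC : ∀ s ω, |Y s ω| ≤ C) :
    ∫ ω, ∫ s, w s * Y s ω ∂μ ∂P = ∫ s, w s * ∫ ω, Y s ω ∂P ∂μ := by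
  simp_rw [integral_integral_swap (integrable_prod_mul_of_abs_le hw hY hC), integral_const_mul]

end Fubini

lemma integral_comp_eq_add_integral_Ioc_of_condExp {E Ω : Type*} [MeasurableSpace E]
    {m m0 : MeasurableSpace Ω} {P : Measure Ω} [IsProbabilityMeasure P] (hm : m ≤ m0)
    {X : ℝ → Ω → E} (hX : Measurable (uncurry X)) {ψ g : E → ℝ} {Cψ Cg : ℝ}
    (hψ : Measurable ψ) (hCψ : ∀ x, |ψ x| ≤ Cψ) (hg : Measurable g) (hCg : ∀ x, |g x| ≤ Cg)
    {t : ℝ} (hcond : P[fun ω => ψ (X t ω) - ψ (X 0 ω) - ∫ r in Ioc 0 t, g (X r ω) | m]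
      =ᵐ[P] fun ω => ψ (X 0 ω) - ψ (X 0 ω) - ∫ r in Ioc 0 0, g (X r ω)) :
    ∫ ω, ψ (X t ω) ∂P = ∫ ω, ψ (X 0 ω) ∂P + ∫ r in Ioc 0 t, ∫ ω, g (X r ω) ∂P := by
  have hψX (s : ℝ) : Integrable (fun ω => ψ (X s ω)) P :=
    integrable_comp_of_abs_le hψ (hX.comp measurable_prodMk_left) hCψ
  have hgX : Measurable (uncurry fun r ω => g (X r ω)) := hg.comp hX
  have hgXC (r : ℝ) (ω : Ω) : |g (X r ω)| ≤ Cg := hCg _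
  have hAint : Integrable (fun ω => ∫ r in Ioc 0 t, g (X r ω)) P := by
    simpa only [uncurry_apply_pair, one_mul] using
      (integrable_prod_mul_of_abs_le (integrable_const 1) hgX hgXC).integral_prod_left
  have hfubini := integral_integral_mul_swap_of_abs_le (P := P) (μ := volume.restrict (Ioc 0 t))
    (integrable_const 1) hgX hgXC
  simp only [one_mul] at hfubini
  have hmean : ∫ ω, (ψ (X t ω) - ψ (X 0 ω) - ∫ r in Ioc 0 t, g (X r ω)) ∂P = 0 := by
    rw [← integral_condExp hm, integral_congr_ae hcond]
    simp
  have hincr : Integrable (fun ω => ψ (X t ω) - ψ (X 0 ω)) P := (hψX t).sub (hψX 0)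
  rw [integral_sub hincr hAint, integral_sub (hψX t) (hψX 0), hfubini] at hmean
  linarith

theorem stmt3_general {E Ω : Type*} [MeasurableSpace E] [m0 : MeasurableSpace Ω] (P : Measure Ω)
    [IsProbabilityMeasure P]
    (ℱ : ℝ → MeasurableSpace Ω) (hle : ∀ t, ℱ t ≤ m0)
    (X : ℝ → Ω → E)
    (hXmeas : Measurable fun p : ℝ × Ω => X p.1 p.2)
    (ν : Measure E) (hν : P.map (X 0) = ν)
    (α : ℝ) (hα : 0 < α)
    (ψ g : E → ℝ) (hψ : Measurable ψ) (hψb : ∃ C, ∀ x, |ψ x| ≤ C)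
    (hg : Measurable g) (hgb : ∃ C, ∀ x, |g x| ≤ C)
    (hmart : ∀ s t : ℝ, 0 ≤ s → s ≤ t →
      P[fun ω => ψ (X t ω) - ψ (X 0 ω) - ∫ r in Ioc (0:ℝ) t, g (X r ω) | ℱ s]
        =ᵐ[P] fun ω => ψ (X s ω) - ψ (X 0 ω) - ∫ r in Ioc (0:ℝ) s, g (X r ω)) :
    (∫ ω, (∫ s in Ioi (0:ℝ), Real.exp (-(α * s)) * (α * ψ (X s ω) - g (X s ω))) ∂P)
        = ∫ x, ψ x ∂ν ∧
      ∀ k : E → ℝ, Measurable k → (∃ C, ∀ x, |k x| ≤ C) →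
        (g = fun x => α * ψ x - k x) →
        (∫ ω, (∫ s in Ioi (0:ℝ), Real.exp (-(α * s)) * k (X s ω)) ∂P) = ∫ x, ψ x ∂ν := by
  obtain ⟨Cψ, hCψ⟩ := hψb
  obtain ⟨Cg, hCg⟩ := hgb
  have hXs (s : ℝ) : Measurable (X s) := hXmeas.comp measurable_prodMk_left
  have hv : Measurable fun s => ∫ ω, g (X s ω) ∂P :=
    (hg.comp hXmeas).stronglyMeasurable.integral_prod_right'.measurable
  have hvi : IntegrableOn (fun s => exp (-(α * s)) * ∫ ω, g (X s ω) ∂P) (Ioi 0) :=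
    (integrableOn_exp_neg_mul hα 0).mul_bdd hv.aestronglyMeasurable
      (ae_of_all _ fun s => abs_integral_le_of_abs_le fun ω => hCg (X s ω))
  have hresolvent := setIntegral_exp_neg_mul_mul_sub_eq hα hv hvi fun t ht =>
    integral_comp_eq_add_integral_Ioc_of_condExp (hle 0) hXmeas hψ hCψ hg hCg
      (hmart 0 t le_rfl ht.le)
  have hbound (s : ℝ) (ω : Ω) : |α * ψ (X s ω) - g (X s ω)| ≤ α * Cψ + Cg := by
    refine (abs_sub _ _).trans (add_le_add ?_ (hCg _))
    rw [abs_mul, abs_of_pos hα]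
    exact mul_le_mul_of_nonneg_left (hCψ _) hα.le
  have hidentity : ∫ ω, (∫ s in Ioi 0, exp (-(α * s)) * (α * ψ (X s ω) - g (X s ω))) ∂P
      = ∫ x, ψ x ∂ν := by
    rw [integral_integral_mul_swap_of_abs_le (integrableOn_exp_neg_mul hα 0)
      ((hψ.comp hXmeas).const_mul α |>.sub (hg.comp hXmeas)) hbound, ← hν,
      integral_map (hXs 0).aemeasurable hψ.aestronglyMeasurable, ← hresolvent]
    refine setIntegral_congr_fun measurableSet_Ioi fun s _ => ?_
    rw [integral_sub ((integrable_comp_of_abs_le hψ (hXs s) hCψ).const_mul α)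
      (integrable_comp_of_abs_le hg (hXs s) hCg), integral_const_mul]
  refine ⟨hidentity, fun k _ _ hgk => ?_⟩
  subst hgk
  simpa only [sub_sub_cancel] using hidentity

/-- Let `E` be a Polish space, `α > 0`, and `X` an `E`-valued progressively
measurable process on a filtered probability space whose initial value `X 0` has law `ν`.
Let `ψ, g : E → ℝ` be bounded measurable such that
`M t = ψ (X t) - ψ (X 0) - ∫_0^t g (X s) ds` is a martingale.  Then
`E[∫_0^∞ e^{-α s} (α ψ (X s) - g (X s)) ds] = ∫ ψ dν`, and in particular, for bounded
measurable `k` with `g = α ψ - k`, `E[∫_0^∞ e^{-α s} k (X s) ds] = ∫ ψ dν`. -/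
theorem stmt3 {E Ω : Type*} [MeasurableSpace E] [TopologicalSpace E] [PolishSpace E]
    [BorelSpace E] [m0 : MeasurableSpace Ω] (P : Measure Ω) [IsProbabilityMeasure P]
    (ℱ : ℝ → MeasurableSpace Ω) (hle : ∀ t, ℱ t ≤ m0) (hmono : Monotone ℱ)
    (X : ℝ → Ω → E)
    (hXmeas : Measurable fun p : ℝ × Ω => X p.1 p.2)
    (hprog : ∀ t : ℝ, 0 ≤ t →
      Measurable[((inferInstance : MeasurableSpace (Icc (0:ℝ) t)).prod (ℱ t))]
        (fun p : Icc (0:ℝ) t × Ω => X p.1 p.2))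
    (ν : Measure E) (hν : P.map (X 0) = ν)
    (α : ℝ) (hα : 0 < α)
    (ψ g : E → ℝ) (hψ : Measurable ψ) (hψb : ∃ C, ∀ x, |ψ x| ≤ C)
    (hg : Measurable g) (hgb : ∃ C, ∀ x, |g x| ≤ C)
    (hmartint : ∀ t : ℝ, 0 ≤ t → Integrable
      (fun ω => ψ (X t ω) - ψ (X 0 ω) - ∫ r in Ioc (0:ℝ) t, g (X r ω)) P)
    (hmart : ∀ s t : ℝ, 0 ≤ s → s ≤ t →
      P[fun ω => ψ (X t ω) - ψ (X 0 ω) - ∫ r in Ioc (0:ℝ) t, g (X r ω) | ℱ s]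
        =ᵐ[P] fun ω => ψ (X s ω) - ψ (X 0 ω) - ∫ r in Ioc (0:ℝ) s, g (X r ω)) :
    (∫ ω, (∫ s in Ioi (0:ℝ), Real.exp (-(α * s)) * (α * ψ (X s ω) - g (X s ω))) ∂P)
        = ∫ x, ψ x ∂ν ∧
      ∀ k : E → ℝ, Measurable k → (∃ C, ∀ x, |k x| ≤ C) →
        (g = fun x => α * ψ x - k x) →
        (∫ ω, (∫ s in Ioi (0:ℝ), Real.exp (-(α * s)) * k (X s ω)) ∂P) = ∫ x, ψ x ∂ν :=
  stmt3_general (m0 := m0) P ℱ hle X hXmeas ν hν α hα ψ g hψ hψb hg hgb hmart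
end

section
/- Let (Ω, F, P_0) be a probability space and H ⊆ L^1(P_0) a nonempty set of nonnegative random variables with E_0[Λ] = 1 for all Λ ∈ H, which is closed in the weak topology σ(L^1, L^∞) of L^1(P_0). Suppose there exists a function h : ℝ_+ → ℝ_+ with h(τ)/(τ log τ) → ∞ as τ → ∞ and sup_{Λ ∈ H} E_0[h(Λ)] < ∞. Then the functional F(Λ) := E_0[Λ log Λ] attains its minimum on H. -/
open MeasureTheory Filter
open scoped ENNReal

/-- The weak topology `σ(L¹, L∞)` on `L¹(P₀)`: the coarsest topology making
`Λ ↦ ∫ Λ g dP₀` continuous for every bounded measurable `g`. -/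
noncomputable def weakL1Top {Ω : Type*} {m : MeasurableSpace Ω} (P₀ : Measure Ω) :
    TopologicalSpace (Lp ℝ 1 P₀) :=
  ⨅ (g : Ω → ℝ) (_ : Measurable g) (_ : ∃ K, ∀ ω, |g ω| ≤ K),
    TopologicalSpace.induced (fun Λ : Lp ℝ 1 P₀ => ∫ ω, Λ ω * g ω ∂P₀) inferInstance

/-- The relative-entropy functional `F(Λ) = E₀[Λ log Λ]`, valued in `(-∞, ∞]`, encoded in
`ℝ≥0∞` via the shift by the constant `e⁻¹` (using `x log x ≥ -e⁻¹` and that `P₀` is a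
probability measure). -/
noncomputable def entF {Ω : Type*} {m : MeasurableSpace Ω} (P₀ : Measure Ω) (Λ : Ω → ℝ) :
    ℝ≥0∞ :=
  ∫⁻ ω, ENNReal.ofReal (Λ ω * Real.log (Λ ω) + Real.exp (-1)) ∂P₀

/-!
Fenchel–Young duality gives `x log x + e⁻¹ = sup_t (x t - e^{t-1} + e⁻¹)` for `x ≥ 0`, so on
nonnegative densities `F` is a supremum of the functionals `Λ ↦ ∫ (Λ g - e^{g-1} + e⁻¹)` with `g`
bounded (the supremum is reached, via Fatou, along truncations of `1 + log Λ`). Each of them is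
continuous for `σ(L¹, L∞)`, hence `F` is weakly lower semicontinuous on `H`.

The growth condition on `h` makes `H` uniformly integrable (de la Vallée Poussin). Along an
ultrafilter on `H` the set functions `A ↦ ∫_A Λ` converge; uniform integrability makes the limit
countably additive, and its Radon–Nikodym density is a weak limit of the ultrafilter, which lies
in `H` since `H` is weakly closed (Dunford–Pettis). So `H` is weakly compact, and a lower
semicontinuous function attains its minimum on a nonempty compact set.
-/

open Topology Real

/-- The tangent line of `x ↦ x log x + e⁻¹` at `x = exp (t - 1)`. -/
noncomputable def entMinorant (t x : ℝ) : ℝ := x * t - (exp (t - 1) - exp (-1))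

lemma entMinorant_le {x : ℝ} (hx : 0 ≤ x) (t : ℝ) :
    entMinorant t x ≤ x * log x + exp (-1) := by
  unfold entMinorant
  rcases hx.eq_or_lt with rfl | hx
  · simp [(exp_pos _).le]
  · have hexp : exp (t - 1) = x * exp (t - 1 - log x) := by
      rw [← exp_log hx, ← exp_add, log_exp]; ring_nf
    nlinarith [add_one_le_exp (t - 1 - log x)]

lemma exp_sub_one_sub_exp_neg_one_le (t : ℝ) : exp (t - 1) - exp (-1) ≤ t * exp (t - 1) := by
  have : exp (-1) = exp (t - 1) * exp (-t) := by rw [← exp_add]; ring_nf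
  nlinarith [add_one_le_exp (-t), exp_pos (t - 1)]

lemma entMinorant_nonneg {t x : ℝ} (h : 0 ≤ t * (x - exp (t - 1))) : 0 ≤ entMinorant t x := by
  unfold entMinorant
  nlinarith [exp_sub_one_sub_exp_neg_one_le t]

/-- `1 + log x`, the tangency parameter at `x`, truncated to `[-n, n]`; at `x = 0` it is `-n`,
not the junk value `1 + log 0 = 1`. -/
noncomputable def logTrunc (n : ℕ) (x : ℝ) : ℝ :=
  if x = 0 then -n else max (-n : ℝ) (min (n : ℝ) (1 + log x))

lemma abs_logTrunc_le (n : ℕ) (x : ℝ) : |logTrunc n x| ≤ n := by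
  unfold logTrunc
  split_ifs
  · simp
  · exact abs_le.mpr ⟨le_max_left _ _, max_le (by simp) (min_le_left _ _)⟩

@[fun_prop]
lemma measurable_logTrunc (n : ℕ) : Measurable (logTrunc n) :=
  Measurable.ite (measurableSet_singleton 0) measurable_const (by fun_prop)

lemma entMinorant_logTrunc_nonneg (n : ℕ) {x : ℝ} (hx : 0 ≤ x) :
    0 ≤ entMinorant (logTrunc n x) x := by
  apply entMinorant_nonneg
  unfold logTrunc
  split_ifs with h0
  · subst h0; nlinarith [exp_pos (-(n : ℝ) - 1), n.cast_nonneg (α := ℝ)]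
  have hx : exp (log x) = x := exp_log (hx.lt_of_ne' h0)
  rcases le_or_gt 0 (1 + log x) with hs | hs
  · have ht : max (-(n : ℝ)) (min (n : ℝ) (1 + log x)) = min (n : ℝ) (1 + log x) :=
      max_eq_right ((neg_nonpos.mpr n.cast_nonneg).trans (le_min n.cast_nonneg hs))
    rw [ht]
    refine mul_nonneg (le_min n.cast_nonneg hs) (sub_nonneg.mpr ?_)
    calc exp (min (n : ℝ) (1 + log x) - 1) ≤ exp (log x) := by
          gcongr; linarith [min_le_right (n : ℝ) (1 + log x)]
      _ = x := hx
  · rw [min_eq_right (hs.le.trans n.cast_nonneg)]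
    refine mul_nonneg_of_nonpos_of_nonpos (max_le (neg_nonpos.mpr n.cast_nonneg) hs.le)
      (sub_nonpos.mpr ?_)
    calc x = exp (log x) := hx.symm
      _ ≤ exp (max (-(n : ℝ)) (1 + log x) - 1) := by
          gcongr; linarith [le_max_right (-(n : ℝ)) (1 + log x)]

lemma tendsto_entMinorant_logTrunc {x : ℝ} (hx : 0 ≤ x) :
    Tendsto (fun n : ℕ => entMinorant (logTrunc n x) x) atTop (𝓝 (x * log x + exp (-1))) := by
  rcases hx.eq_or_lt with rfl | hx
  · have hexp : Tendsto (fun n : ℕ => exp (-(n : ℝ) - 1)) atTop (𝓝 0) :=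
      tendsto_exp_atBot.comp <| tendsto_atBot_add_const_right _ _ <|
        tendsto_neg_atTop_atBot.comp tendsto_natCast_atTop_atTop
    simpa [logTrunc, entMinorant] using (tendsto_const_nhds (x := exp (-1))).sub hexp
  · refine tendsto_const_nhds.congr' ?_
    filter_upwards [eventually_ge_atTop ⌈|1 + log x|⌉₊] with n hn
    have habs := abs_le.mp ((Nat.le_ceil _).trans (Nat.cast_le.mpr hn))
    rw [logTrunc, if_neg hx.ne', min_eq_right habs.2, max_eq_right habs.1, entMinorant,
      add_sub_cancel_left, exp_log hx]
    ring

lemma tendsto_div_of_tendsto_div_mul_log {h : ℝ → ℝ}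
    (hh : Tendsto (fun τ => h τ / (τ * log τ)) atTop atTop) :
    Tendsto (fun τ => h τ / τ) atTop atTop := by
  refine (hh.atTop_mul_atTop₀ tendsto_log_atTop).congr' ?_
  filter_upwards [eventually_gt_atTop 1] with τ hτ
  have : log τ ≠ 0 := (log_pos hτ).ne'
  field_simp

section

variable {Ω : Type*} [MeasurableSpace Ω] {μ : Measure Ω} {S : Set (Lp ℝ 1 μ)} {K : ℝ}

def boundedMeasurable (Ω : Type*) [MeasurableSpace Ω] : Set (Ω → ℝ) :=
  {g | Measurable g ∧ ∃ K, ∀ ω, |g ω| ≤ K}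

lemma MeasureTheory.Integrable.mul_boundedMeasurable {f g : Ω → ℝ} (hf : Integrable f μ)
    (hg : g ∈ boundedMeasurable Ω) : Integrable (fun ω => f ω * g ω) μ :=
  let ⟨hgm, K, hK⟩ := hg
  hf.mul_bdd hgm.aestronglyMeasurable (c := K) (ae_of_all _ hK)

lemma integrable_exp_sub_one_sub [IsFiniteMeasure μ] {g : Ω → ℝ}
    (hg : g ∈ boundedMeasurable Ω) : Integrable (fun ω => exp (g ω - 1) - exp (-1)) μ := by
  obtain ⟨hgm, K, hK⟩ := hg
  refine (Integrable.of_bound (by fun_prop) (exp (K - 1)) (ae_of_all _ fun ω => ?_)).sub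
    (integrable_const _)
  rw [norm_of_nonneg (exp_pos _).le]
  gcongr
  exact (abs_le.mp (hK ω)).2

lemma integrable_entMinorant [IsFiniteMeasure μ] {f g : Ω → ℝ} (hf : Integrable f μ)
    (hg : g ∈ boundedMeasurable Ω) : Integrable (fun ω => entMinorant (g ω) (f ω)) μ :=
  (hf.mul_boundedMeasurable hg).sub (integrable_exp_sub_one_sub hg)

lemma integral_entMinorant [IsFiniteMeasure μ] {f g : Ω → ℝ} (hf : Integrable f μ)
    (hg : g ∈ boundedMeasurable Ω) :
    ∫ ω, entMinorant (g ω) (f ω) ∂μ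
      = ∫ ω, f ω * g ω ∂μ - ∫ ω, (exp (g ω - 1) - exp (-1)) ∂μ :=
  integral_sub (hf.mul_boundedMeasurable hg) (integrable_exp_sub_one_sub hg)

lemma ofReal_integral_le_lintegral_ofReal {f : Ω → ℝ} (hf : Integrable f μ) :
    ENNReal.ofReal (∫ ω, f ω ∂μ) ≤ ∫⁻ ω, ENNReal.ofReal (f ω) ∂μ := by
  refine ENNReal.ofReal_le_of_le_toReal ?_
  rw [integral_eq_lintegral_pos_part_sub_lintegral_neg_part hf]
  exact sub_le_self _ ENNReal.toReal_nonneg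

theorem entF_eq_iSup [IsFiniteMeasure μ] {f : Ω → ℝ} (hfm : Measurable f)
    (hfi : Integrable f μ) (hf0 : 0 ≤ᵐ[μ] f) :
    entF μ f = ⨆ g ∈ boundedMeasurable Ω, ENNReal.ofReal (∫ ω, entMinorant (g ω) (f ω) ∂μ) := by
  refine le_antisymm ?_ (iSup₂_le fun g hg => ?_)
  · calc entF μ f
        = ∫⁻ ω, liminf (fun n => ENNReal.ofReal (entMinorant (logTrunc n (f ω)) (f ω))) atTop ∂μ :=
          lintegral_congr_ae <| hf0.mono fun ω hω =>
            (((ENNReal.continuous_ofReal.tendsto _).comp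
              (tendsto_entMinorant_logTrunc hω)).liminf_eq).symm
      _ ≤ liminf (fun n => ∫⁻ ω, ENNReal.ofReal (entMinorant (logTrunc n (f ω)) (f ω)) ∂μ)
            atTop :=
          lintegral_liminf_le fun n => by unfold entMinorant; fun_prop
      _ ≤ _ := by
          refine liminf_le_of_frequently_le' (Frequently.of_forall fun n => ?_)
          have hg : (fun ω => logTrunc n (f ω)) ∈ boundedMeasurable Ω :=
            ⟨by fun_prop, n, fun ω => abs_logTrunc_le n (f ω)⟩
          rw [← ofReal_integral_eq_lintegral_ofReal (integrable_entMinorant hfi hg)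
            (hf0.mono fun ω hω => entMinorant_logTrunc_nonneg n hω)]
          exact le_iSup₂_of_le _ hg le_rfl
  · calc ENNReal.ofReal (∫ ω, entMinorant (g ω) (f ω) ∂μ)
        ≤ ∫⁻ ω, ENNReal.ofReal (entMinorant (g ω) (f ω)) ∂μ :=
          ofReal_integral_le_lintegral_ofReal (integrable_entMinorant hfi hg)
      _ ≤ entF μ f :=
          lintegral_mono_ae <| hf0.mono fun ω hω => ENNReal.ofReal_le_ofReal (entMinorant_le hω _)

lemma continuous_integral_mul_weakL1Top {g : Ω → ℝ} (hg : g ∈ boundedMeasurable Ω) :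
    Continuous[weakL1Top μ, _] fun Λ : Lp ℝ 1 μ => ∫ ω, Λ ω * g ω ∂μ :=
  continuous_iInf_dom (i := g) <| continuous_iInf_dom (i := hg.1) <|
    continuous_iInf_dom (i := hg.2) continuous_induced_dom

lemma le_nhds_weakL1Top {l : Filter (Lp ℝ 1 μ)} {Λ₀ : Lp ℝ 1 μ}
    (h : ∀ g ∈ boundedMeasurable Ω,
      Tendsto (fun Λ : Lp ℝ 1 μ => ∫ ω, Λ ω * g ω ∂μ) l (𝓝 (∫ ω, Λ₀ ω * g ω ∂μ))) :
    l ≤ @nhds _ (weakL1Top μ) Λ₀ := by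
  rw [weakL1Top]
  simp only [_root_.nhds_iInf, nhds_induced, le_iInf_iff, ← tendsto_iff_comap]
  exact fun g hgm hK => h g ⟨hgm, hK⟩

theorem lowerSemicontinuousOn_entF [IsFiniteMeasure μ] :
    @LowerSemicontinuousOn _ _ (weakL1Top μ) _ (fun Λ : Lp ℝ 1 μ => entF μ Λ)
      {Λ | 0 ≤ᵐ[μ] Λ} := by
  let := weakL1Top μ
  have hsup : LowerSemicontinuousOn (fun Λ : Lp ℝ 1 μ => ⨆ g ∈ boundedMeasurable Ω,
      ENNReal.ofReal (∫ ω, entMinorant (g ω) (Λ ω) ∂μ)) {Λ | 0 ≤ᵐ[μ] Λ} := by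
    refine lowerSemicontinuousOn_biSup fun g hg =>
      (Continuous.lowerSemicontinuous ?_).lowerSemicontinuousOn _
    simp_rw [integral_entMinorant (L1.integrable_coeFn _) hg]
    exact ENNReal.continuous_ofReal.comp
      ((continuous_integral_mul_weakL1Top hg).sub continuous_const)
  have heq : ∀ Λ : Lp ℝ 1 μ, 0 ≤ᵐ[μ] Λ → entF μ Λ = ⨆ g ∈ boundedMeasurable Ω,
      ENNReal.ofReal (∫ ω, entMinorant (g ω) (Λ ω) ∂μ) := fun Λ hΛ =>
    entF_eq_iSup (Lp.stronglyMeasurable Λ).measurable (L1.integrable_coeFn Λ) hΛ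
  intro Λ hΛ y hy
  dsimp only at hy ⊢
  rw [heq Λ hΛ] at hy
  filter_upwards [hsup Λ hΛ y hy, self_mem_nhdsWithin] with Λ' hΛ' hmem
  rwa [heq Λ' hmem]

lemma MeasureTheory.SimpleFunc.mem_boundedMeasurable (s : SimpleFunc Ω ℝ) :
    ⇑s ∈ boundedMeasurable Ω :=
  ⟨s.measurable, s.exists_forall_norm_le⟩

lemma exists_simpleFunc_abs_sub_le {g : Ω → ℝ} (hg : g ∈ boundedMeasurable Ω) {q : ℝ}
    (hq : 0 < q) : ∃ s : SimpleFunc Ω ℝ, ∀ ω, |g ω - s ω| ≤ q := by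
  obtain ⟨hgm, K, hK⟩ := hg
  have hrange : (Set.range fun ω => ⌊g ω / q⌋).Finite := by
    refine (Set.finite_Icc ⌊-K / q⌋ ⌊K / q⌋).subset ?_
    rintro _ ⟨ω, rfl⟩
    obtain ⟨hlo, hhi⟩ := abs_le.mp (hK ω)
    exact ⟨Int.floor_mono (by gcongr), Int.floor_mono (by gcongr)⟩
  let k : SimpleFunc Ω ℤ :=
    ⟨fun ω => ⌊g ω / q⌋, fun _ => (hgm.div_const q).floor (measurableSet_singleton _), hrange⟩
  refine ⟨k.map fun n : ℤ => q * n, fun ω => ?_⟩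
  have hlo := (le_div_iff₀ hq).mp (Int.floor_le (g ω / q))
  have hhi := (div_lt_iff₀ hq).mp (Int.lt_floor_add_one (g ω / q))
  change |g ω - q * ((⌊g ω / q⌋ : ℤ) : ℝ)| ≤ q
  rw [abs_le]
  constructor <;> nlinarith

lemma abs_integral_mul_le (Λ : Lp ℝ 1 μ) {u : Ω → ℝ} {q : ℝ} (hu : ∀ ω, |u ω| ≤ q) :
    |∫ ω, Λ ω * u ω ∂μ| ≤ ‖Λ‖ * q := by
  rw [← Real.norm_eq_abs, L1.norm_eq_integral_norm Λ, ← integral_mul_const q fun ω => ‖Λ ω‖]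
  refine norm_integral_le_of_norm_le ((L1.integrable_coeFn Λ).norm.mul_const q)
    (ae_of_all _ fun ω => ?_)
  rw [norm_mul, Real.norm_eq_abs (u ω)]
  exact mul_le_mul_of_nonneg_left (hu ω) (norm_nonneg _)

lemma tendsto_integral_mul_simpleFunc {l : Filter (Lp ℝ 1 μ)} {Λ₀ : Lp ℝ 1 μ}
    (hset : ∀ A, MeasurableSet A → Tendsto (fun Λ : Lp ℝ 1 μ => ∫ ω in A, Λ ω ∂μ) l
      (𝓝 (∫ ω in A, Λ₀ ω ∂μ)))
    (s : SimpleFunc Ω ℝ) :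
    Tendsto (fun Λ : Lp ℝ 1 μ => ∫ ω, Λ ω * s ω ∂μ) l (𝓝 (∫ ω, Λ₀ ω * s ω ∂μ)) := by
  induction s using SimpleFunc.induction with
  | @const c A hA =>
    have key : ∀ Λ : Lp ℝ 1 μ, ∫ ω, Λ ω * (SimpleFunc.piecewise A hA (SimpleFunc.const Ω c)
        (SimpleFunc.const Ω 0)) ω ∂μ = (∫ ω in A, Λ ω ∂μ) * c := fun Λ => by
      simp only [SimpleFunc.coe_piecewise, SimpleFunc.coe_const]
      rw [← integral_mul_const, ← integral_indicator hA]
      congr 1 with ω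
      by_cases hω : ω ∈ A <;> simp [hω]
    simpa only [key] using (hset A hA).mul_const c
  | @add s t _ hs ht =>
    have key : ∀ Λ : Lp ℝ 1 μ,
        ∫ ω, Λ ω * (s + t) ω ∂μ = ∫ ω, Λ ω * s ω ∂μ + ∫ ω, Λ ω * t ω ∂μ := fun Λ => by
      simp only [SimpleFunc.coe_add, Pi.add_apply, mul_add]
      exact integral_add ((L1.integrable_coeFn Λ).mul_boundedMeasurable s.mem_boundedMeasurable)
        ((L1.integrable_coeFn Λ).mul_boundedMeasurable t.mem_boundedMeasurable)
    simpa only [key] using hs.add ht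

theorem tendsto_integral_mul_of_tendsto_setIntegral {l : Filter (Lp ℝ 1 μ)} {Λ₀ : Lp ℝ 1 μ}
    {K : ℝ} (hK : ∀ᶠ Λ in l, ‖Λ‖ ≤ K)
    (hset : ∀ A, MeasurableSet A → Tendsto (fun Λ : Lp ℝ 1 μ => ∫ ω in A, Λ ω ∂μ) l
      (𝓝 (∫ ω in A, Λ₀ ω ∂μ)))
    {g : Ω → ℝ} (hg : g ∈ boundedMeasurable Ω) :
    Tendsto (fun Λ : Lp ℝ 1 μ => ∫ ω, Λ ω * g ω ∂μ) l (𝓝 (∫ ω, Λ₀ ω * g ω ∂μ)) := by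
  rw [Metric.tendsto_nhds]
  intro ε hε
  set M := max K ‖Λ₀‖ + 1
  have hM : 0 < M := by positivity
  obtain ⟨s, hs⟩ := exists_simpleFunc_abs_sub_le hg (q := ε / (3 * M)) (by positivity)
  have happrox : ∀ Λ : Lp ℝ 1 μ, ‖Λ‖ ≤ M →
      |∫ ω, Λ ω * g ω ∂μ - ∫ ω, Λ ω * s ω ∂μ| ≤ ε / 3 := by
    intro Λ hΛ
    have hΛi := L1.integrable_coeFn Λ
    calc |∫ ω, Λ ω * g ω ∂μ - ∫ ω, Λ ω * s ω ∂μ|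
        = |∫ ω, Λ ω * (g ω - s ω) ∂μ| := by
          rw [← integral_sub (hΛi.mul_boundedMeasurable hg)
            (hΛi.mul_boundedMeasurable s.mem_boundedMeasurable)]
          simp_rw [mul_sub]
      _ ≤ ‖Λ‖ * (ε / (3 * M)) := abs_integral_mul_le Λ hs
      _ ≤ M * (ε / (3 * M)) := by gcongr
      _ = ε / 3 := by field_simp
  filter_upwards [hK, Metric.tendsto_nhds.mp (tendsto_integral_mul_simpleFunc hset s) (ε / 3)
    (by positivity)] with Λ hΛK hΛs
  have h₁ := happrox Λ (by linarith [le_max_left K ‖Λ₀‖])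
  have h₀ := happrox Λ₀ (by linarith [le_max_right K ‖Λ₀‖])
  rw [Real.dist_eq] at hΛs ⊢
  rw [abs_le] at h₀ h₁
  rw [abs_lt] at hΛs ⊢
  constructor <;> linarith

lemma exists_ofReal_le_add_mul_of_tendsto_div {h : ℝ → ℝ}
    (hh : Tendsto (fun τ => h τ / τ) atTop atTop) {c : ℝ} (hc : 0 < c) :
    ∃ M > 0, ∀ x,
      ENNReal.ofReal x ≤ ENNReal.ofReal M + ENNReal.ofReal c * ENNReal.ofReal (h x) := by
  obtain ⟨M, hM⟩ := eventually_atTop.mp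
    ((eventually_gt_atTop 0).and (hh.eventually_ge_atTop c⁻¹))
  refine ⟨max M 1, lt_max_of_lt_right one_pos, fun x => ?_⟩
  rcases lt_or_ge x (max M 1) with hx | hx
  · exact (ENNReal.ofReal_le_ofReal hx.le).trans le_self_add
  obtain ⟨hx0, hxh⟩ := hM x ((le_max_left _ _).trans hx)
  have : x ≤ c * h x :=
    calc x = c * (c⁻¹ * x) := by field_simp
      _ ≤ c * h x := by gcongr; exact (le_div_iff₀ hx0).mp hxh
  rw [← ENNReal.ofReal_mul hc.le]
  exact (ENNReal.ofReal_le_ofReal this).trans le_add_self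

theorem unifIntegrable_of_lintegral_le {ι : Type*} {f : ι → Ω → ℝ} {h : ℝ → ℝ}
    (hh : Tendsto (fun τ => h τ / τ) atTop atTop) {C : ℝ≥0∞} (hC : C ≠ ⊤)
    (hf0 : ∀ i, 0 ≤ᵐ[μ] f i) (hbdd : ∀ i, ∫⁻ ω, ENNReal.ofReal (h (f i ω)) ∂μ ≤ C) :
    UnifIntegrable f 1 μ := by
  intro ε hε
  set c := ε / (2 * (C.toReal + 1))
  have hc : 0 < c := by positivity
  obtain ⟨M', hM', hpt⟩ := exists_ofReal_le_add_mul_of_tendsto_div hh hc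
  refine ⟨ε / (2 * M'), by positivity, fun i A hA hμA => ?_⟩
  rw [eLpNorm_indicator_eq_eLpNorm_restrict hA, eLpNorm_one_eq_lintegral_enorm]
  calc ∫⁻ ω in A, ‖f i ω‖ₑ ∂μ
      = ∫⁻ ω in A, ENNReal.ofReal (f i ω) ∂μ :=
        lintegral_congr_ae (ae_restrict_of_ae ((hf0 i).mono fun ω hω => Real.enorm_of_nonneg hω))
    _ ≤ ∫⁻ ω in A, (ENNReal.ofReal M' + ENNReal.ofReal c * ENNReal.ofReal (h (f i ω))) ∂μ :=
        lintegral_mono fun ω => hpt _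
    _ = ENNReal.ofReal M' * μ A + ENNReal.ofReal c * ∫⁻ ω in A, ENNReal.ofReal (h (f i ω)) ∂μ := by
        rw [lintegral_add_left measurable_const, setLIntegral_const,
          lintegral_const_mul' _ _ ENNReal.ofReal_ne_top, mul_comm]
    _ ≤ ENNReal.ofReal M' * ENNReal.ofReal (ε / (2 * M')) + ENNReal.ofReal c * C := by
        gcongr
        exact (setLIntegral_le_lintegral _ _).trans (hbdd i)
    _ ≤ ENNReal.ofReal ε := by
        rw [← ENNReal.ofReal_toReal hC, ← ENNReal.ofReal_mul hM'.le, ← ENNReal.ofReal_mul hc.le,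
          ← ENNReal.ofReal_add (by positivity) (by positivity)]
        refine ENNReal.ofReal_le_ofReal ?_
        have hCt := C.toReal_nonneg
        have : c * C.toReal ≤ ε / 2 := by
          rw [div_mul_eq_mul_div, div_le_div_iff₀ (by positivity) two_pos]
          nlinarith
        calc M' * (ε / (2 * M')) + c * C.toReal ≤ ε / 2 + ε / 2 := by
              rw [show M' * (ε / (2 * M')) = ε / 2 by field_simp]; linarith
          _ = ε := by ring

lemma setIntegral_le_of_eLpNorm_indicator_le {f : Ω → ℝ} {A : Set Ω} (hA : MeasurableSet A)
    {ε : ℝ} (hε : 0 ≤ ε) (h : eLpNorm (A.indicator f) 1 μ ≤ ENNReal.ofReal ε) :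
    ∫ ω in A, f ω ∂μ ≤ ε := by
  rw [eLpNorm_indicator_eq_eLpNorm_restrict hA, eLpNorm_one_eq_lintegral_enorm] at h
  refine (Real.le_norm_self _).trans <| (norm_integral_le_lintegral_norm _).trans <|
    ENNReal.toReal_le_of_le_ofReal hε ?_
  simpa only [ofReal_norm] using h

lemma exists_tendsto_setIntegral_of_norm_le (hS0 : ∀ Λ ∈ S, 0 ≤ᵐ[μ] Λ)
    (hSK : ∀ Λ ∈ S, ‖Λ‖ ≤ K) (𝒰 : Ultrafilter (Lp ℝ 1 μ)) (h𝒰 : S ∈ 𝒰) (A : Set Ω) :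
    ∃ r ∈ Set.Icc 0 K, Tendsto (fun Λ : Lp ℝ 1 μ => ∫ ω in A, Λ ω ∂μ) 𝒰 (𝓝 r) := by
  refine isCompact_Icc.ultrafilter_le_nhds (𝒰.map _) ?_
  rw [Ultrafilter.coe_map, le_principal_iff]
  refine mem_map.mpr (mem_of_superset h𝒰 fun Λ hΛ => ⟨?_, ?_⟩)
  · exact integral_nonneg_of_ae (ae_restrict_of_ae (hS0 Λ hΛ))
  · calc ∫ ω in A, Λ ω ∂μ ≤ ∫ ω, Λ ω ∂μ :=
          setIntegral_le_integral (L1.integrable_coeFn Λ) (hS0 Λ hΛ)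
      _ ≤ ∫ ω, ‖Λ ω‖ ∂μ := (Real.le_norm_self _).trans (norm_integral_le_integral_norm _)
      _ = ‖Λ‖ := (L1.norm_eq_integral_norm Λ).symm
      _ ≤ K := hSK Λ hΛ

lemma tendsto_zero_of_tendsto_setIntegral [IsFiniteMeasure μ]
    (hUI : UnifIntegrable (fun Λ : S => (Λ : Ω → ℝ)) 1 μ) {𝒰 : Ultrafilter (Lp ℝ 1 μ)}
    (h𝒰 : S ∈ 𝒰) {r : Set Ω → ℝ} (hr : ∀ A, 0 ≤ r A)
    (hlim : ∀ A, Tendsto (fun Λ : Lp ℝ 1 μ => ∫ ω in A, Λ ω ∂μ) 𝒰 (𝓝 (r A)))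
    {s : ℕ → Set Ω} (hs : ∀ n, MeasurableSet (s n)) (hanti : Antitone s)
    (hinter : ⋂ n, s n = ∅) :
    Tendsto (fun n => r (s n)) atTop (𝓝 0) := by
  have hμ : Tendsto (μ ∘ s) atTop (𝓝 0) := by
    simpa [hinter] using tendsto_measure_iInter_atTop (fun n => (hs n).nullMeasurableSet)
      hanti ⟨0, measure_ne_top μ _⟩
  rw [Metric.tendsto_atTop]
  intro ε hε
  obtain ⟨δ, hδ, hUIδ⟩ := hUI (half_pos hε)
  obtain ⟨N, hN⟩ := eventually_atTop.mp
    (ENNReal.tendsto_nhds_zero.mp hμ _ (ENNReal.ofReal_pos.mpr hδ))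
  refine ⟨N, fun n hn => ?_⟩
  have : r (s n) ≤ ε / 2 := le_of_tendsto (hlim _) <| mem_of_superset h𝒰 fun Λ hΛ =>
    setIntegral_le_of_eLpNorm_indicator_le (hs n) (half_pos hε).le
      (hUIδ ⟨Λ, hΛ⟩ (s n) (hs n) (hN n hn))
  rw [Real.dist_eq, sub_zero, abs_of_nonneg (hr _)]
  linarith

theorem exists_measure_tendsto_setIntegral [IsFiniteMeasure μ] (hS0 : ∀ Λ ∈ S, 0 ≤ᵐ[μ] Λ)
    (hSK : ∀ Λ ∈ S, ‖Λ‖ ≤ K) (hUI : UnifIntegrable (fun Λ : S => (Λ : Ω → ℝ)) 1 μ)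
    (𝒰 : Ultrafilter (Lp ℝ 1 μ)) (h𝒰 : S ∈ 𝒰) :
    ∃ ν : Measure Ω, IsFiniteMeasure ν ∧ ν ≪ μ ∧ ∀ A, MeasurableSet A →
      Tendsto (fun Λ : Lp ℝ 1 μ => ∫ ω in A, Λ ω ∂μ) 𝒰 (𝓝 (ν.real A)) := by
  choose r hr hlim using exists_tendsto_setIntegral_of_norm_le hS0 hSK 𝒰 h𝒰
  have hring : IsSetRing {A : Set Ω | MeasurableSet A} :=
    ⟨.empty, fun _ _ => .union, fun _ _ => .diff⟩
  have hadd : ∀ A B, MeasurableSet B → Disjoint A B → r (A ∪ B) = r A + r B :=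
    fun A B hB hAB => tendsto_nhds_unique (hlim _) <| ((hlim A).add (hlim B)).congr fun Λ =>
      (setIntegral_union hAB hB (L1.integrable_coeFn Λ).integrableOn
        (L1.integrable_coeFn Λ).integrableOn).symm
  have hempty : r ∅ = 0 := tendsto_nhds_unique (hlim ∅) (by simp)
  let m := hring.addContent_of_union (fun A => ENNReal.ofReal (r A)) (by simp [hempty])
    fun _ ht hd => by rw [hadd _ _ ht hd, ENNReal.ofReal_add (hr _).1 (hr _).1]
  let ν := Measure.ofMeasurable (fun A _ => m A) addContent_empty fun f hf hd =>
    addContent_iUnion_eq_sum_of_tendsto_zero hring m (fun _ _ => ENNReal.ofReal_ne_top)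
      (fun s hs hanti hinter => by
        have := (ENNReal.continuous_ofReal.tendsto 0).comp
          (tendsto_zero_of_tendsto_setIntegral hUI h𝒰 (fun A => (hr A).1) hlim hs hanti hinter)
        rwa [ENNReal.ofReal_zero] at this)
      hf (MeasurableSet.iUnion hf) hd
  have hν : ∀ A, MeasurableSet A → ν A = ENNReal.ofReal (r A) := fun A hA =>
    Measure.ofMeasurable_apply A hA
  refine ⟨ν, ⟨by rw [hν _ .univ]; exact ENNReal.ofReal_lt_top⟩,
    Measure.AbsolutelyContinuous.mk fun A hA hμA => ?_, fun A hA => ?_⟩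
  · have : r A = 0 := tendsto_nhds_unique (hlim A) (by simp [Measure.restrict_eq_zero.mpr hμA])
    rw [hν A hA, this, ENNReal.ofReal_zero]
  · rw [measureReal_def, hν A hA, ENNReal.toReal_ofReal (hr A).1]
    exact hlim A

theorem exists_tendsto_setIntegral_of_unifIntegrable [IsFiniteMeasure μ]
    (hS0 : ∀ Λ ∈ S, 0 ≤ᵐ[μ] Λ) (hSK : ∀ Λ ∈ S, ‖Λ‖ ≤ K)
    (hUI : UnifIntegrable (fun Λ : S => (Λ : Ω → ℝ)) 1 μ)
    (𝒰 : Ultrafilter (Lp ℝ 1 μ)) (h𝒰 : S ∈ 𝒰) :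
    ∃ Λ₀ : Lp ℝ 1 μ, ∀ A, MeasurableSet A →
      Tendsto (fun Λ : Lp ℝ 1 μ => ∫ ω in A, Λ ω ∂μ) 𝒰 (𝓝 (∫ ω in A, Λ₀ ω ∂μ)) := by
  obtain ⟨ν, _, hνμ, hν⟩ := exists_measure_tendsto_setIntegral hS0 hSK hUI 𝒰 h𝒰
  have hint : Integrable (fun ω => (ν.rnDeriv μ ω).toReal) μ := Measure.integrable_toReal_rnDeriv
  refine ⟨hint.toL1 _, fun A hA => ?_⟩
  rw [integral_congr_ae (ae_restrict_of_ae hint.coeFn_toL1),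
    Measure.setIntegral_toReal_rnDeriv hνμ]
  exact hν A hA

theorem isCompact_weakL1Top_of_unifIntegrable [IsFiniteMeasure μ]
    (hS0 : ∀ Λ ∈ S, 0 ≤ᵐ[μ] Λ) (hSK : ∀ Λ ∈ S, ‖Λ‖ ≤ K)
    (hUI : UnifIntegrable (fun Λ : S => (Λ : Ω → ℝ)) 1 μ) (hS : IsClosed[weakL1Top μ] S) :
    @IsCompact _ (weakL1Top μ) S := by
  let := weakL1Top μ
  refine isCompact_iff_ultrafilter_le_nhds.mpr fun 𝒰 h𝒰 => ?_
  have h𝒰S : S ∈ 𝒰 := le_principal_iff.mp h𝒰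
  obtain ⟨Λ₀, hΛ₀⟩ := exists_tendsto_setIntegral_of_unifIntegrable hS0 hSK hUI 𝒰 h𝒰S
  have hle : ↑𝒰 ≤ 𝓝 Λ₀ := le_nhds_weakL1Top fun g hg =>
    tendsto_integral_mul_of_tendsto_setIntegral (mem_of_superset h𝒰S hSK) hΛ₀ hg
  exact ⟨Λ₀, hS.mem_of_tendsto hle h𝒰S, hle⟩

end

theorem stmt7_general {Ω : Type*} [m0 : MeasurableSpace Ω] (P₀ : Measure Ω) [IsProbabilityMeasure P₀]
    (H : Set (Lp ℝ 1 P₀)) (hne : H.Nonempty)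
    (hpos : ∀ Λ ∈ H, 0 ≤ᵐ[P₀] (Λ : Ω → ℝ))
    (hmean : ∀ Λ ∈ H, (∫ ω, Λ ω ∂P₀) = 1)
    (hclosed : @IsClosed _ (weakL1Top P₀) H)
    (h : ℝ → ℝ)
    (hhlim : Tendsto (fun τ : ℝ => h τ / (τ * Real.log τ)) atTop atTop)
    (C : ℝ≥0∞) (hC : C ≠ ⊤)
    (hbdd : ∀ Λ ∈ H, (∫⁻ ω, ENNReal.ofReal (h (Λ ω)) ∂P₀) ≤ C) :
    ∃ Λ₀ ∈ H, ∀ Λ ∈ H, entF P₀ (Λ₀ : Ω → ℝ) ≤ entF P₀ (Λ : Ω → ℝ) := by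
  have hUI : UnifIntegrable (fun Λ : H => (Λ : Ω → ℝ)) 1 P₀ :=
    unifIntegrable_of_lintegral_le (tendsto_div_of_tendsto_div_mul_log hhlim) hC
      (fun Λ => hpos Λ Λ.2) fun Λ => hbdd Λ Λ.2
  have hnorm : ∀ Λ ∈ H, ‖Λ‖ ≤ 1 := fun Λ hΛ => by
    rw [L1.norm_eq_integral_norm, ← hmean Λ hΛ]
    exact (integral_congr_ae ((hpos Λ hΛ).mono fun ω hω => Real.norm_of_nonneg hω)).le
  let := weakL1Top P₀
  exact (lowerSemicontinuousOn_entF.mono hpos).exists_isMinOn hne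
    (isCompact_weakL1Top_of_unifIntegrable hpos hnorm hUI hclosed)

/-- Let `H ⊆ L¹(P₀)` be a nonempty set of nonnegative random variables
with `E₀[Λ] = 1` for all `Λ ∈ H`, closed in the weak topology `σ(L¹, L∞)`.  If there is
an `h : ℝ₊ → ℝ₊` with `h(τ)/(τ log τ) → ∞` and `sup_{Λ ∈ H} E₀[h(Λ)] < ∞`, then the
functional `F(Λ) = E₀[Λ log Λ]` attains its minimum on `H`. -/
theorem stmt7 {Ω : Type*} [m0 : MeasurableSpace Ω] (P₀ : Measure Ω) [IsProbabilityMeasure P₀]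
    (H : Set (Lp ℝ 1 P₀)) (hne : H.Nonempty)
    (hpos : ∀ Λ ∈ H, 0 ≤ᵐ[P₀] (Λ : Ω → ℝ))
    (hmean : ∀ Λ ∈ H, (∫ ω, Λ ω ∂P₀) = 1)
    (hclosed : @IsClosed _ (weakL1Top P₀) H)
    (h : ℝ → ℝ) (hh0 : ∀ x : ℝ, 0 ≤ x → 0 ≤ h x)
    (hhlim : Tendsto (fun τ : ℝ => h τ / (τ * Real.log τ)) atTop atTop)
    (C : ℝ≥0∞) (hC : C ≠ ⊤)
    (hbdd : ∀ Λ ∈ H, (∫⁻ ω, ENNReal.ofReal (h (Λ ω)) ∂P₀) ≤ C) :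
    ∃ Λ₀ ∈ H, ∀ Λ ∈ H, entF P₀ (Λ₀ : Ω → ℝ) ≤ entF P₀ (Λ : Ω → ℝ) :=
  stmt7_general (m0 := m0) P₀ H hne hpos hmean hclosed h hhlim C hC hbdd
end

section
/- Let (Ω, F) carry an E-valued measurable process (X_r)_{r ∈ [0,T]}, E Polish, with F_{u,v} := σ(X_r : u ≤ r ≤ v) and F_{0,t} = F_{0,s} ∨ F_{s,t} for fixed 0 < s < t ≤ T. Let P_0, P be probability measures on F_{0,t} with P ≪ P_0 and Λ_t := dP/dP_0, and suppose that under P_0 the σ-algebras F_{0,s} and F_{s,t} are conditionally independent given σ(X_s). If Λ_t = E_0[Λ_t | F_{s,t}] P_0-almost surelyy (i.e. Λ_t has an F_{s,t}-measurable version), then s is a Markov point for X under P: F_{0,s} and F_{s,t} are conditionally independent given σ(X_s) under P. -/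
open MeasureTheory Set

/-- `σ(X_r : u ≤ r ≤ v)`, the σ-algebra generated by the process on the time window `[u, v]`. -/
def sigmaUpTo {Ω E : Type*} [MeasurableSpace E] (X : ℝ → Ω → E) (u v : ℝ) :
    MeasurableSpace Ω :=
  ⨆ r ∈ Icc u v, MeasurableSpace.comap (X r) inferInstance

/-- Conditional independence of the σ-algebras `G` and `H` given `C` under `Q`:
`E_Q[g h | C] = E_Q[g | C] E_Q[h | C]` a.s. for all bounded `G`-measurable `g` and
bounded `H`-measurable `h`. -/
def CondIndepGiven {Ω : Type*} {m0 : MeasurableSpace Ω} (Q : Measure Ω)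
    (G H C : MeasurableSpace Ω) : Prop :=
  ∀ g h : Ω → ℝ, Measurable[G] g → Measurable[H] h →
    (∃ K, ∀ ω, |g ω| ≤ K) → (∃ K, ∀ ω, |h ω| ≤ K) →
    Q[fun ω => g ω * h ω|C] =ᵐ[Q] fun ω => (Q[g|C]) ω * (Q[h|C]) ω

/-- The real-valued Radon–Nikodym derivative `dP/dP₀`. -/
noncomputable def rnd {Ω : Type*} {m : MeasurableSpace Ω} (P P₀ : Measure Ω) (ω : Ω) : ℝ :=
  (P.rnDeriv P₀ ω).toReal

/-!
Conditional independence of `G` and `H` given `C ≤ H` is equivalent to `Q[g|H] = Q[g|C]` for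
bounded `G`-measurable `g`. If the density `Λ = dP/dP₀` is `H`-measurable, then `Λ` can be pulled
out of `P₀[· | H]`, so `P[g|H] = P₀[g|H]` `P`-a.s.; under `P₀` the latter equals the
`C`-measurable `P₀[g|C]`, hence `P[g|H]` is `C`-measurable and equals `P[g|C]`.
-/

section ConditionalIndependence

-- `m0` is declared last so that it is the ambient `MeasurableSpace Ω` instance.
variable {Ω : Type*} {G H C m0 : MeasurableSpace Ω}

lemma integrable_of_abs_le {μ : Measure Ω} [IsFiniteMeasure μ] {f : Ω → ℝ}
    (hf : AEStronglyMeasurable f μ) {K : ℝ} (hK : ∀ᵐ ω ∂μ, |f ω| ≤ K) : Integrable f μ :=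
  .of_bound hf K (by simpa only [Real.norm_eq_abs] using hK)

lemma integral_mul_indicator_one (μ : Measure Ω) (f : Ω → ℝ) {A : Set Ω} (hA : MeasurableSet A) :
    ∫ ω, f ω * A.indicator 1 ω ∂μ = ∫ ω in A, f ω ∂μ := by
  simp_rw [← indicator_mul_right, Pi.one_apply, mul_one]
  exact integral_indicator hA

variable {Q : Measure Ω} [IsFiniteMeasure Q]

lemma condExp_ae_eq_condExp_of_aestronglyMeasurable_condExp
    (hH : H ≤ m0) (hCH : C ≤ H) {g : Ω → ℝ} (h : AEStronglyMeasurable[C] (Q[g|H]) Q) :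
    Q[g|H] =ᵐ[Q] Q[g|C] :=
  (condExp_of_aestronglyMeasurable' (hCH.trans hH) h integrable_condExp).symm.trans
    (condExp_condExp_of_le hCH hH)

theorem CondIndepGiven.condExp_ae_eq (hG : G ≤ m0) (hH : H ≤ m0) (hCH : C ≤ H)
    (hci : CondIndepGiven Q G H C) {g : Ω → ℝ} (hg : Measurable[G] g) {K : ℝ}
    (hK : ∀ ω, |g ω| ≤ K) :
    Q[g|H] =ᵐ[Q] Q[g|C] := by
  have hC : C ≤ m0 := hCH.trans hH
  have hgi : Integrable g Q :=
    integrable_of_abs_le (hg.mono hG le_rfl).aestronglyMeasurable (ae_of_all _ hK)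
  have hgC_bdd : ∀ᵐ ω ∂Q, ‖Q[g|C] ω‖ ≤ K := by
    simpa only [Real.norm_eq_abs] using ae_bdd_abs_condExp_of_ae_bdd_abs (m := C) (ae_of_all Q hK)
  refine (ae_eq_condExp_of_forall_setIntegral_eq hH hgi
    (fun _ _ _ => integrable_condExp.integrableOn) (fun A hA _ => ?_)
    (stronglyMeasurable_condExp.mono hCH).aestronglyMeasurable).symm
  have hAm : MeasurableSet A := hH _ hA
  have hA_bdd : ∀ ω, |A.indicator (1 : Ω → ℝ) ω| ≤ 1 := fun ω => by
    by_cases hω : ω ∈ A <;> simp [hω]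
  have hAi : Integrable (A.indicator (1 : Ω → ℝ)) Q :=
    (integrable_const 1).indicator hAm
  calc ∫ ω in A, Q[g|C] ω ∂Q
      = ∫ ω, Q[g|C] ω * A.indicator 1 ω ∂Q := (integral_mul_indicator_one Q _ hAm).symm
    _ = ∫ ω, Q[Q[g|C] * A.indicator 1|C] ω ∂Q := (integral_condExp hC).symm
    _ = ∫ ω, Q[g|C] ω * Q[A.indicator 1|C] ω ∂Q :=
        integral_congr_ae
          (condExp_stronglyMeasurable_mul_of_bound hC stronglyMeasurable_condExp hAi K hgC_bdd)
    _ = ∫ ω, Q[fun ω => g ω * A.indicator 1 ω|C] ω ∂Q :=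
        integral_congr_ae
          (hci g _ hg (stronglyMeasurable_one.indicator hA).measurable ⟨K, hK⟩ ⟨1, hA_bdd⟩).symm
    _ = ∫ ω, g ω * A.indicator 1 ω ∂Q := integral_condExp hC
    _ = ∫ ω in A, g ω ∂Q := integral_mul_indicator_one Q g hAm

theorem condIndepGiven_of_forall_condExp_ae_eq (hG : G ≤ m0) (hH : H ≤ m0) (hCH : C ≤ H)
    (h : ∀ g : Ω → ℝ, Measurable[G] g → (∃ K, ∀ ω, |g ω| ≤ K) → Q[g|H] =ᵐ[Q] Q[g|C]) :
    CondIndepGiven Q G H C := by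
  rintro g k hg hk ⟨Kg, hKg⟩ ⟨Kk, hKk⟩
  have hC : C ≤ m0 := hCH.trans hH
  have hgi : Integrable g Q :=
    integrable_of_abs_le (hg.mono hG le_rfl).aestronglyMeasurable (ae_of_all _ hKg)
  have hki : Integrable k Q :=
    integrable_of_abs_le (hk.mono hH le_rfl).aestronglyMeasurable (ae_of_all _ hKk)
  have hgki : Integrable (g * k) Q :=
    hgi.mul_bdd hki.aestronglyMeasurable
      (ae_of_all _ fun ω => by simpa only [Real.norm_eq_abs] using hKk ω)
  have hgC_bdd : ∀ᵐ ω ∂Q, ‖Q[g|C] ω‖ ≤ Kg := by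
    simpa only [Real.norm_eq_abs] using ae_bdd_abs_condExp_of_ae_bdd_abs (m := C) (ae_of_all Q hKg)
  calc Q[g * k|C]
      =ᵐ[Q] Q[Q[g * k|H]|C] := (condExp_condExp_of_le hCH hH).symm
    _ =ᵐ[Q] Q[Q[g|C] * k|C] := condExp_congr_ae
        ((condExp_mul_of_stronglyMeasurable_right (m := H) hk.stronglyMeasurable hgki hgi).trans
          ((h g hg ⟨Kg, hKg⟩).mul .rfl))
    _ =ᵐ[Q] Q[g|C] * Q[k|C] :=
        condExp_stronglyMeasurable_mul_of_bound hC stronglyMeasurable_condExp hki Kg hgC_bdd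

theorem condIndepGiven_iff_forall_condExp_ae_eq (hG : G ≤ m0) (hH : H ≤ m0) (hCH : C ≤ H) :
    CondIndepGiven Q G H C ↔
      ∀ g : Ω → ℝ, Measurable[G] g → (∃ K, ∀ ω, |g ω| ≤ K) → Q[g|H] =ᵐ[Q] Q[g|C] :=
  ⟨fun hci _ hg ⟨_, hK⟩ => hci.condExp_ae_eq hG hH hCH hg hK,
    condIndepGiven_of_forall_condExp_ae_eq hG hH hCH⟩

end ConditionalIndependence

section ChangeOfMeasure

variable {Ω : Type*} {G H C m0 : MeasurableSpace Ω} {P₀ P : Measure Ω} [IsFiniteMeasure P₀]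
  [IsFiniteMeasure P]

theorem condExp_ae_eq_of_aestronglyMeasurable_rnd (hH : H ≤ m0) (hac : P ≪ P₀)
    (hΛ : AEStronglyMeasurable[H] (rnd P P₀) P₀) {g : Ω → ℝ} (hg : AEStronglyMeasurable g P₀)
    {K : ℝ} (hK : ∀ ω, |g ω| ≤ K) :
    P[g|H] =ᵐ[P] P₀[g|H] := by
  obtain ⟨Λ, hΛm, hΛeq⟩ := hΛ
  have hΛi : Integrable Λ P₀ := Measure.integrable_toReal_rnDeriv.congr hΛeq
  have hgi₀ : Integrable g P₀ := integrable_of_abs_le hg (ae_of_all _ hK)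
  have hgi : Integrable g P := integrable_of_abs_le (hg.mono_ac hac) (ae_of_all _ hK)
  have hΛgi : Integrable (Λ * g) P₀ :=
    hΛi.mul_bdd hg (ae_of_all _ fun ω => by simpa only [Real.norm_eq_abs] using hK ω)
  have hgH_bdd : ∀ᵐ ω ∂P, |P₀[g|H] ω| ≤ K :=
    hac.ae_le (ae_bdd_abs_condExp_of_ae_bdd_abs (ae_of_all _ hK))
  have hgHi : Integrable (P₀[g|H]) P :=
    integrable_of_abs_le ((stronglyMeasurable_condExp.mono hH).aestronglyMeasurable) hgH_bdd
  have change_measure : ∀ (f : Ω → ℝ) {A : Set Ω}, MeasurableSet A →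
      ∫ ω in A, f ω ∂P = ∫ ω in A, Λ ω * f ω ∂P₀ := fun f A hA =>
    (setIntegral_toReal_rnDeriv_mul hac hA).symm.trans
      (setIntegral_congr_ae hA (hΛeq.mono fun ω hω _ => by rw [← hω]; rfl))
  refine (ae_eq_condExp_of_forall_setIntegral_eq hH hgi (fun _ _ _ => hgHi.integrableOn)
    (fun A hA _ => ?_) stronglyMeasurable_condExp.aestronglyMeasurable).symm
  calc ∫ ω in A, P₀[g|H] ω ∂P
      = ∫ ω in A, Λ ω * P₀[g|H] ω ∂P₀ := change_measure _ (hH _ hA)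
    _ = ∫ ω in A, P₀[Λ * g|H] ω ∂P₀ := setIntegral_congr_ae (hH _ hA)
        ((condExp_mul_of_stronglyMeasurable_left hΛm hΛgi hgi₀).mono fun _ hω _ => hω.symm)
    _ = ∫ ω in A, Λ ω * g ω ∂P₀ := setIntegral_condExp hH hΛgi hA
    _ = ∫ ω in A, g ω ∂P := (change_measure g (hH _ hA)).symm

theorem CondIndepGiven.of_absolutelyContinuous (hG : G ≤ m0) (hH : H ≤ m0) (hCH : C ≤ H)
    (hac : P ≪ P₀) (hΛ : AEStronglyMeasurable[H] (rnd P P₀) P₀)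
    (hci : CondIndepGiven P₀ G H C) :
    CondIndepGiven P G H C := by
  rw [condIndepGiven_iff_forall_condExp_ae_eq hG hH hCH] at hci ⊢
  rintro g hg ⟨K, hK⟩
  have hgP₀ : AEStronglyMeasurable g P₀ := (hg.mono hG le_rfl).aestronglyMeasurable
  have hgH : P[g|H] =ᵐ[P] P₀[g|C] :=
    (condExp_ae_eq_of_aestronglyMeasurable_rnd hH hac hΛ hgP₀ hK).trans
      (hac.ae_le (hci g hg ⟨K, hK⟩))
  exact condExp_ae_eq_condExp_of_aestronglyMeasurable_condExp hH hCH
    ⟨_, stronglyMeasurable_condExp, hgH⟩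

end ChangeOfMeasure

section SigmaUpTo

variable {Ω E : Type*} [MeasurableSpace E] {X : ℝ → Ω → E}

lemma comap_le_sigmaUpTo {u v r : ℝ} (hr : r ∈ Icc u v) :
    MeasurableSpace.comap (X r) inferInstance ≤ sigmaUpTo X u v :=
  le_biSup (fun r => MeasurableSpace.comap (X r) inferInstance) hr

lemma sigmaUpTo_mono {u v u' v' : ℝ} (h : Icc u v ⊆ Icc u' v') :
    sigmaUpTo X u v ≤ sigmaUpTo X u' v' :=
  biSup_mono h

end SigmaUpTo

theorem stmt15_general {Ω E : Type*} [m0 : MeasurableSpace Ω]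
    [MeasurableSpace E]
    (X : ℝ → Ω → E) (s t : ℝ) (hs : 0 < s) (hst : s < t)
    (hamb : sigmaUpTo X 0 t = m0)
    (P₀ P : Measure Ω) [IsProbabilityMeasure P₀] [IsProbabilityMeasure P]
    (hac : P ≪ P₀)
    (hMarkov₀ : CondIndepGiven P₀ (sigmaUpTo X 0 s) (sigmaUpTo X s t)
      (MeasurableSpace.comap (X s) inferInstance))
    (hΛ : rnd P P₀ =ᵐ[P₀] P₀[rnd P P₀|sigmaUpTo X s t]) :
    CondIndepGiven P (sigmaUpTo X 0 s) (sigmaUpTo X s t)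
      (MeasurableSpace.comap (X s) inferInstance) := by
  have hG : sigmaUpTo X 0 s ≤ m0 := hamb ▸ sigmaUpTo_mono (Icc_subset_Icc_right hst.le)
  have hH : sigmaUpTo X s t ≤ m0 := hamb ▸ sigmaUpTo_mono (Icc_subset_Icc_left hs.le)
  exact hMarkov₀.of_absolutelyContinuous hG hH (comap_le_sigmaUpTo ⟨le_rfl, hst.le⟩) hac
    (stronglyMeasurable_condExp.aestronglyMeasurable.congr hΛ.symm)

/-- With `F_{u,v} = σ(X_r : u ≤ r ≤ v)`, `F_{0,t} = F_{0,s} ∨ F_{s,t}`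
(for fixed `0 < s < t ≤ T`), `P ≪ P₀`, `Λ_t = dP/dP₀`, and `F_{0,s}, F_{s,t}` conditionally
independent given `σ(X_s)` under `P₀`: if `Λ_t = E₀[Λ_t | F_{s,t}]` `P₀`-a.s., then `s` is a
Markov point for `X` under `P`, i.e. `F_{0,s}` and `F_{s,t}` are conditionally independent
given `σ(X_s)` under `P`. -/
theorem stmt15 {Ω E : Type*} [m0 : MeasurableSpace Ω]
    [MeasurableSpace E] [TopologicalSpace E] [PolishSpace E] [BorelSpace E]
    (X : ℝ → Ω → E) (T s t : ℝ) (hs : 0 < s) (hst : s < t) (htT : t ≤ T)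
    (hamb : sigmaUpTo X 0 t = m0)
    (hjoin : sigmaUpTo X 0 t = sigmaUpTo X 0 s ⊔ sigmaUpTo X s t)
    (P₀ P : Measure Ω) [IsProbabilityMeasure P₀] [IsProbabilityMeasure P]
    (hac : P ≪ P₀)
    (hMarkov₀ : CondIndepGiven P₀ (sigmaUpTo X 0 s) (sigmaUpTo X s t)
      (MeasurableSpace.comap (X s) inferInstance))
    (hΛ : rnd P P₀ =ᵐ[P₀] P₀[rnd P P₀|sigmaUpTo X s t]) :
    CondIndepGiven P (sigmaUpTo X 0 s) (sigmaUpTo X s t)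
      (MeasurableSpace.comap (X s) inferInstance) :=
  stmt15_general (m0 := m0) X s t hs hst hamb P₀ P hac hMarkov₀ hΛ
end
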